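/- Suppose λ: primes → ℝ satisfies |λ(p)| ≤ 2 and ∑_{p ≤ x} λ(p)²/p = log log x + O(1) as x → ∞ (Sato–Tate / symmetric square on average), and suppose ∑_{p ≤ x} log(1 − λ(p)p^{-1/2} + p^{-1}) = O(1) as x → ∞ (DRH for the degree-2 Euler product at s = 1/2). Then ∑_{p ≤ x} λ(p)/√p ~ (1/2)·log log x as x → ∞. -/

import Mathlib

/-!
Expanding the logarithm of the Euler factor gives
`log (1 - λ(p) / √p + 1 / p) = -λ(p) / √p + 1 / p - λ(p)² / (2p) + O(p^(-3/2))`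
uniformly in `|λ(p)| ≤ 2`. Summed over `p ≤ x`, the left side is `O(1)` by hypothesis and the
errors are `O(1)`, while `∑ λ(p)² / p = log log x + O(1)` by hypothesis and
`∑ 1 / p = log log x + O(1)` by Mertens' theorem; hence
`∑ λ(p) / √p = (1/2) log log x + O(1)`.

Mertens' theorem follows by Abel summation against `1 / log t` from
`∑_{p ≤ N} log p / p = log N + O(1)`, which comes from comparing Legendre's formula for `log N!`
with Stirling's bound and Chebyshev's bound `θ(N) ≤ N log 4`.
-/

open Nat hiding log
open Real Finset Filter MeasureTheory Topology

lemma summable_inv_sqrt_pow_three : Summable fun n : ℕ => (√n)⁻¹ ^ 3 := by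
  refine (summable_nat_rpow.mpr (by norm_num : -(3 / 2 : ℝ) < -1)).congr fun n => ?_
  rw [sqrt_eq_rpow, ← rpow_neg (Nat.cast_nonneg n), ← rpow_natCast,
    ← rpow_mul (Nat.cast_nonneg n)]
  norm_num

lemma div_sub_one_le_factorization_factorial {p : ℕ} (hp : p.Prime) (N : ℕ) :
    (N : ℝ) / p - 1 ≤ (N !).factorization p := by
  have hdiv : N / p ≤ (N !).factorization p := by
    rw [factorization_factorial hp (Nat.lt_add_of_pos_right two_pos :
      Nat.log p N < Nat.log p N + 2)]
    simpa using single_le_sum (f := fun i => N / p ^ i) (fun _ _ => Nat.zero_le _)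
      (by simp : 1 ∈ Ico 1 (Nat.log p N + 2))
  calc (N : ℝ) / p - 1 ≤ ((N / p : ℕ) : ℝ) := by
        rw [← floor_div_eq_div (K := ℝ)]; exact (sub_one_lt_floor _).le
    _ ≤ _ := by exact_mod_cast hdiv

lemma factorization_factorial_le_div_sub_one {p : ℕ} (hp : p.Prime) (N : ℕ) :
    ((N !).factorization p : ℝ) ≤ N / (p - 1) :=
  calc ((N !).factorization p : ℝ) ≤ ((N / (p - 1) : ℕ) : ℝ) := by
        exact_mod_cast factorization_factorial_le_div_pred hp N
    _ ≤ N / ((p - 1 : ℕ) : ℝ) := cast_div_le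
    _ = N / (p - 1) := by rw [cast_sub hp.one_le, cast_one]

lemma log_factorial_eq_sum_primesLE (N : ℕ) :
    log (N ! : ℕ) = ∑ p ∈ primesLE N, ((N !).factorization p : ℝ) * log p := by
  rw [log_nat_eq_sum_factorization]
  refine Finsupp.sum_of_support_subset _ (fun p hp => ?_) _ (by simp)
  rw [support_factorization, mem_primeFactors] at hp
  exact mem_primesLE.mpr ⟨(hp.1.dvd_factorial).mp hp.2.1, hp.1⟩

lemma log_factorial_le (N : ℕ) : log (N ! : ℕ) ≤ N * log N := by
  rw [← Real.log_pow]
  exact log_le_log (by positivity) (by exact_mod_cast factorial_le_pow N)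

lemma mul_log_sub_le_log_factorial (N : ℕ) : N * log N - N ≤ log (N ! : ℕ) := by
  rcases N.eq_zero_or_pos with rfl | hN
  · simp
  have := Stirling.le_log_factorial_stirling hN.ne'
  have : 0 ≤ log N := log_nonneg (by exact_mod_cast hN)
  have : 0 ≤ log (2 * π) := log_nonneg (by nlinarith [pi_gt_three])
  linarith

lemma sum_primesLE_log_div_le (N : ℕ) :
    ∑ p ∈ primesLE N, log p / p ≤ log N + log 4 := by
  rcases N.eq_zero_or_pos with rfl | hN
  · simpa [primesLE_zero] using log_nonneg (by norm_num : (1 : ℝ) ≤ 4)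
  have hlegendre : ∑ p ∈ primesLE N, ((N : ℝ) / p - 1) * log p ≤ log (N ! : ℕ) := by
    rw [log_factorial_eq_sum_primesLE]
    refine sum_le_sum fun p hp => ?_
    have hp := prime_of_mem_primesLE hp
    exact mul_le_mul_of_nonneg_right (div_sub_one_le_factorization_factorial hp N)
      (log_nonneg (by exact_mod_cast hp.one_le))
  have htheta := Chebyshev.theta_le_log4_mul_x (Nat.cast_nonneg N)
  rw [Chebyshev.theta_eq_sum_primesLE_log] at htheta
  have hsum : ∑ p ∈ primesLE N, ((N : ℝ) / p - 1) * log p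
      = N * ∑ p ∈ primesLE N, log p / p - ∑ p ∈ primesLE N, log p := by
    rw [mul_sum, ← sum_sub_distrib]
    exact sum_congr rfl fun p _ => by ring
  rw [← mul_le_mul_iff_of_pos_left (by exact_mod_cast hN : (0 : ℝ) < N)]
  linarith [log_factorial_le N]

lemma log_div_mul_sub_one_le {x : ℝ} (hx : 2 ≤ x) :
    log x / (x * (x - 1)) ≤ 4 * (√x)⁻¹ ^ 3 := by
  have hs : √x ^ 2 = x := sq_sqrt (by linarith)
  have hs0 : 0 < √x := sqrt_pos.mpr (by linarith)
  have hlog : log x ≤ 2 * √x := by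
    have := log_le_sub_one_of_pos hs0
    rw [log_sqrt (by linarith)] at this
    linarith
  calc log x / (x * (x - 1)) ≤ 2 * √x / (x * (x - 1)) := by gcongr; nlinarith
    _ ≤ 4 * (√x)⁻¹ ^ 3 := by
      generalize √x = s at hs hs0 ⊢
      subst hs
      rw [div_le_iff₀ (by nlinarith)]
      field_simp
      nlinarith [pow_pos hs0 3]

lemma sum_primesLE_log_div_mul_sub_one_le (N : ℕ) :
    ∑ p ∈ primesLE N, log p / (p * (p - 1)) ≤ 4 * ∑' n : ℕ, (√n)⁻¹ ^ 3 :=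
  calc _ ≤ ∑ p ∈ primesLE N, 4 * (√p)⁻¹ ^ 3 := sum_le_sum fun p hp =>
        log_div_mul_sub_one_le (by exact_mod_cast (prime_of_mem_primesLE hp).two_le)
    _ ≤ 4 * ∑' n : ℕ, (√n)⁻¹ ^ 3 := by
        rw [← mul_sum]
        gcongr
        exact summable_inv_sqrt_pow_three.sum_le_tsum _ fun _ _ => by positivity

lemma exists_log_sub_le_sum_primesLE_log_div :
    ∃ K, ∀ N : ℕ, log N - K ≤ ∑ p ∈ primesLE N, log p / p := by
  refine ⟨1 + 4 * ∑' n : ℕ, (√n)⁻¹ ^ 3, fun N => ?_⟩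
  rcases N.eq_zero_or_pos with rfl | hN
  · simp only [primesLE_zero, sum_empty, CharP.cast_eq_zero, log_zero, zero_sub, neg_nonpos]
    positivity
  have hlegendre : log (N ! : ℕ)
      ≤ ∑ p ∈ primesLE N, (N * (log p / p) + N * (log p / (p * (p - 1)))) := by
    rw [log_factorial_eq_sum_primesLE]
    refine sum_le_sum fun p hp => ?_
    have hp2 : (2 : ℝ) ≤ p := by exact_mod_cast (prime_of_mem_primesLE hp).two_le
    have : (p : ℝ) - 1 ≠ 0 := by linarith
    calc ((N !).factorization p : ℝ) * log p ≤ N / (p - 1) * log p :=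
          mul_le_mul_of_nonneg_right
            (factorization_factorial_le_div_sub_one (prime_of_mem_primesLE hp) N)
            (log_nonneg (by linarith))
      _ = _ := by field_simp; ring
  rw [sum_add_distrib, ← mul_sum, ← mul_sum] at hlegendre
  have := (mul_log_sub_le_log_factorial N).trans hlegendre
  have := sum_primesLE_log_div_mul_sub_one_le N
  rw [← mul_le_mul_iff_of_pos_left (by exact_mod_cast hN : (0 : ℝ) < N)]
  nlinarith

noncomputable def sumPrimesLogDiv (x : ℝ) : ℝ := ∑ p ∈ primesLE ⌊x⌋₊, log p / p

lemma exists_abs_sumPrimesLogDiv_sub_log_le :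
    ∃ C, 0 ≤ C ∧ ∀ x : ℝ, 1 ≤ x → |sumPrimesLogDiv x - log x| ≤ C := by
  obtain ⟨K, hK⟩ := exists_log_sub_le_sum_primesLE_log_div
  refine ⟨max (log 4) (K + log 2), le_max_of_le_left (log_nonneg (by norm_num)),
    fun x hx => ?_⟩
  have hN : (1 : ℝ) ≤ ⌊x⌋₊ := by exact_mod_cast Nat.one_le_floor_iff _ |>.mpr hx
  have hlog_le : log ⌊x⌋₊ ≤ log x :=
    log_le_log (by linarith) (Nat.floor_le (by linarith))
  have hle_log : log x ≤ log 2 + log ⌊x⌋₊ := by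
    rw [← log_mul two_ne_zero (by linarith)]
    exact log_le_log (by linarith) (by linarith [Nat.lt_floor_add_one x])
  have hupper := sum_primesLE_log_div_le ⌊x⌋₊
  have hlower := hK ⌊x⌋₊
  rw [sumPrimesLogDiv, abs_le]
  constructor <;> linarith [le_max_left (log 4) (K + log 2),
    le_max_right (log 4) (K + log 2)]

lemma continuousOn_inv_div_log_sq {a b : ℝ} (ha : 1 < a) :
    ContinuousOn (fun t => t⁻¹ / log t ^ 2) (Set.Icc a b) := by
  have h : ∀ t ∈ Set.Icc a b, 1 < t := fun t ht => ha.trans_le ht.1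
  refine ((continuousOn_inv₀.mono fun t ht => ?_).div
    ((continuousOn_log.mono fun t ht => ?_).pow 2)
    fun t ht => pow_ne_zero _ (Real.log_pos (h t ht)).ne') <;>
  exact Set.mem_compl_singleton_iff.mpr (zero_lt_one.trans (h t ht)).ne'

lemma sum_Icc_ite_prime {M : Type*} [AddCommMonoid M] (f : ℕ → M) (n : ℕ) :
    ∑ k ∈ Icc 0 n, (if k.Prime then f k else 0) = ∑ p ∈ primesLE n, f p := by
  rw [primesLE_eq_filter_Icc_zero, sum_filter]

lemma sum_primesLE_inv_eq_div_log_add_integral {x : ℝ} (hx : 2 ≤ x) :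
    ∑ p ∈ primesLE ⌊x⌋₊, (p : ℝ)⁻¹ = sumPrimesLogDiv x / log x
      + ∫ t in 2..x, sumPrimesLogDiv t * (t⁻¹ / log t ^ 2) := by
  have habel := sum_mul_eq_sub_integral_mul₁ (fun k => if k.Prime then log k / k else 0)
    (by simp) (by simp) x (f := fun t => (log t)⁻¹)
    (fun t ht => Real.differentiableAt_inv_log (by linarith [ht.1]) (by linarith [ht.1])
      (by linarith [ht.1]))
    ((continuousOn_inv_div_log_sq one_lt_two).neg.integrableOn_Icc.congr_fun
      (fun t _ => by simp [Real.deriv_inv_log_apply, neg_div]) measurableSet_Icc)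
  simp only [mul_ite, mul_zero, sum_Icc_ite_prime, Real.deriv_inv_log_apply] at habel
  rw [← intervalIntegral.integral_of_le hx] at habel
  have hinv : ∀ p ∈ primesLE ⌊x⌋₊, (log p)⁻¹ * (log p / p) = (p : ℝ)⁻¹ := by
    intro p hp
    have := log_pos (by exact_mod_cast (prime_of_mem_primesLE hp).one_lt : (1 : ℝ) < p)
    field_simp
  rw [sum_congr rfl hinv] at habel
  rw [habel, sub_eq_add_neg, ← intervalIntegral.integral_neg, div_eq_inv_mul]
  congr 2 with t
  rw [sumPrimesLogDiv]
  ring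

lemma intervalIntegrable_sumPrimesLogDiv_mul_inv_div_log_sq {x : ℝ} (hx : 2 ≤ x) :
    IntervalIntegrable (fun t => sumPrimesLogDiv t * (t⁻¹ / log t ^ 2)) volume 2 x := by
  have := integrableOn_mul_sum_Icc (fun k => if k.Prime then log k / k else 0) (m := 0)
    zero_le_two ((continuousOn_inv_div_log_sq one_lt_two (b := x)).integrableOn_Icc)
  simp only [sum_Icc_ite_prime] at this
  exact (intervalIntegrable_iff_integrableOn_Icc_of_le hx).mpr
    (this.congr_fun (fun t _ => by simp only [sumPrimesLogDiv, mul_comm]) measurableSet_Icc)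

lemma integral_sumPrimesLogDiv_mul_inv_div_log_sq {x : ℝ} (hx : 2 ≤ x) :
    ∫ t in 2..x, sumPrimesLogDiv t * (t⁻¹ / log t ^ 2) = log (log x) - log (log 2)
      + ∫ t in 2..x, (sumPrimesLogDiv t - log t) * (t⁻¹ / log t ^ 2) := by
  have hlog : IntervalIntegrable (fun t => log t * (t⁻¹ / log t ^ 2)) volume 2 x :=
    ((continuousOn_log.mono fun t ht =>
      Set.mem_compl_singleton_iff.mpr (by linarith [ht.1])).mul
        (continuousOn_inv_div_log_sq one_lt_two)).intervalIntegrable_of_Icc hx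
  have hlog_eq : ∫ t in 2..x, log t * (t⁻¹ / log t ^ 2) = log (log x) - log (log 2) := by
    rw [← integral_inv_div_log one_lt_two (by linarith)]
    refine intervalIntegral.integral_congr fun t ht => ?_
    rw [Set.uIcc_of_le hx] at ht
    have := (log_pos (by linarith [ht.1] : (1 : ℝ) < t)).ne'
    field_simp
  simp only [sub_mul]
  rw [intervalIntegral.integral_sub
    (intervalIntegrable_sumPrimesLogDiv_mul_inv_div_log_sq hx) hlog, hlog_eq]
  ring

lemma abs_integral_sub_log_mul_inv_div_log_sq_le {A : ℝ → ℝ} {C x : ℝ} (hC0 : 0 ≤ C)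
    (hC : ∀ t, 2 ≤ t → |A t - log t| ≤ C) (hx : 2 ≤ x) :
    |∫ t in 2..x, (A t - log t) * (t⁻¹ / log t ^ 2)| ≤ C / log 2 := by
  have hlogx : log 2 ≤ log x := log_le_log two_pos hx
  calc _ = ‖∫ t in 2..x, (A t - log t) * (t⁻¹ / log t ^ 2)‖ := (Real.norm_eq_abs _).symm
    _ ≤ ∫ t in 2..x, C * (t⁻¹ / log t ^ 2) := by
        refine intervalIntegral.norm_integral_le_of_norm_le hx (ae_of_all _ fun t ht => ?_)
          (((continuousOn_inv_div_log_sq one_lt_two).intervalIntegrable_of_Icc hx).const_mul C)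
        have hJ : 0 ≤ t⁻¹ / log t ^ 2 := by
          have : 0 < t := by linarith [ht.1]
          positivity
        rw [Real.norm_eq_abs, abs_mul, abs_of_nonneg hJ]
        exact mul_le_mul_of_nonneg_right (hC t ht.1.le) hJ
    _ = C / log 2 - C / log x := by
        rw [intervalIntegral.integral_const_mul, integral_inv_div_log_sq one_lt_two (by linarith)]
        ring
    _ ≤ C / log 2 := sub_le_self _ (div_nonneg hC0 (by linarith [Real.log_pos one_lt_two]))

lemma exists_abs_sum_primesLE_inv_sub_log_log_le :
    ∃ C, ∀ x : ℝ, 2 ≤ x →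
      |∑ p ∈ primesLE ⌊x⌋₊, (p : ℝ)⁻¹ - log (log x)| ≤ C := by
  obtain ⟨C, hC0, hC⟩ := exists_abs_sumPrimesLogDiv_sub_log_le
  refine ⟨1 + 2 * (C / log 2) + |log (log 2)|, fun x hx => ?_⟩
  have hlog2 : 0 < log 2 := Real.log_pos one_lt_two
  have hlogx : log 2 ≤ log x := log_le_log two_pos hx
  have hrem := abs_integral_sub_log_mul_inv_div_log_sq_le hC0 (fun t ht => hC t (by linarith)) hx
  have hA : |sumPrimesLogDiv x / log x| ≤ 1 + C / log 2 := by
    have hA0 : 0 ≤ sumPrimesLogDiv x := sum_nonneg fun p _ => by positivity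
    have hAle : sumPrimesLogDiv x ≤ log x + C := by linarith [(abs_le.mp (hC x (by linarith))).2]
    rw [abs_of_nonneg (div_nonneg hA0 (by linarith))]
    calc sumPrimesLogDiv x / log x ≤ (log x + C) / log x :=
          div_le_div_of_nonneg_right hAle (by linarith)
      _ = 1 + C / log x := by field_simp [(by linarith : log x ≠ 0)]
      _ ≤ 1 + C / log 2 := by gcongr
  rw [sum_primesLE_inv_eq_div_log_add_integral hx, integral_sumPrimesLogDiv_mul_inv_div_log_sq hx]
  set R := ∫ t in 2..x, (sumPrimesLogDiv t - log t) * (t⁻¹ / log t ^ 2)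
  calc _ = |(sumPrimesLogDiv x / log x + R) - log (log 2)| := by ring_nf
    _ ≤ |sumPrimesLogDiv x / log x| + |R| + |log (log 2)| :=
        (abs_sub _ _).trans (by gcongr; exact abs_add_le _ _)
    _ ≤ _ := by linarith

lemma abs_log_one_sub_add_add_sq_le {v : ℝ} (hv : |v| ≤ 1 / 2) :
    |log (1 - v) + v + v ^ 2 / 2| ≤ 2 * |v| ^ 3 := by
  have h := abs_log_sub_add_sum_range_le (hv.trans_lt (by norm_num)) 2
  norm_num [sum_range_succ] at h
  calc |log (1 - v) + v + v ^ 2 / 2| = |v + v ^ 2 / 2 + log (1 - v)| := by ring_nf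
    _ ≤ |v| ^ 3 / (1 - |v|) := h
    _ ≤ 2 * |v| ^ 3 := by
      rw [div_le_iff₀ (by linarith)]
      nlinarith [pow_nonneg (abs_nonneg v) 3]

lemma abs_log_one_sub_mul_add_sq_le {a u : ℝ} (ha : |a| ≤ 2) (hu : 0 ≤ u)
    (hu2 : u ^ 2 ≤ 1 / 2) :
    |log (1 - a * u + u ^ 2) + a * u - u ^ 2 + a ^ 2 * u ^ 2 / 2| ≤ 2000 * u ^ 3 := by
  obtain ⟨ha₁, ha₂⟩ := abs_le.mp ha
  rcases le_or_gt u (1 / 5) with hsmall | hlarge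
  · set v := a * u - u ^ 2
    have hv : |v| ≤ 11 / 5 * u := by
      rw [abs_le]; constructor <;> nlinarith
    have hv3 : |v| ^ 3 ≤ (11 / 5 * u) ^ 3 := pow_le_pow_left₀ (abs_nonneg v) hv 3
    have hlog := abs_log_one_sub_add_add_sq_le (v := v) (by linarith)
    have hrest : |a * u ^ 3 - u ^ 4 / 2| ≤ 3 * u ^ 3 := by
      rw [abs_le]; constructor <;> nlinarith [pow_nonneg hu 3, pow_nonneg hu 4]
    calc |log (1 - a * u + u ^ 2) + a * u - u ^ 2 + a ^ 2 * u ^ 2 / 2|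
        = |(log (1 - v) + v + v ^ 2 / 2) + (a * u ^ 3 - u ^ 4 / 2)| := by
          simp only [v]; ring_nf
      _ ≤ 2 * |v| ^ 3 + 3 * u ^ 3 := (abs_add_le _ _).trans (add_le_add hlog hrest)
      _ ≤ 2000 * u ^ 3 := by nlinarith [pow_nonneg hu 3]
  · -- crude bounds suffice, since `u ^ 3 > 1 / 125`
    have hu' : u ≤ 71 / 100 := by nlinarith
    have hy : 1 / 12 ≤ 1 - a * u + u ^ 2 := by nlinarith [mul_le_mul_of_nonneg_right ha₂ hu]
    have hlog_le := log_le_sub_one_of_pos (by linarith : 0 < 1 - a * u + u ^ 2)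
    have hlog_ge := one_sub_inv_le_log_of_pos (by linarith : 0 < 1 - a * u + u ^ 2)
    have hinv : (1 - a * u + u ^ 2)⁻¹ ≤ 12 := by
      rw [inv_le_comm₀ (by linarith) (by norm_num)]; linarith
    have hu3 : 1 / 125 < u ^ 3 := by nlinarith
    rw [abs_le]; constructor <;> nlinarith

lemma abs_log_euler_factor_le {a x : ℝ} (ha : |a| ≤ 2) (hx : 2 ≤ x) :
    |log (1 - a / √x + 1 / x) + a / √x - 1 / x + a ^ 2 / x / 2| ≤ 2000 * (√x)⁻¹ ^ 3 := by
  have hu2 : ((√x)⁻¹) ^ 2 = 1 / x := by rw [inv_pow, sq_sqrt (by linarith), one_div]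
  have h := abs_log_one_sub_mul_add_sq_le ha (inv_nonneg.mpr (sqrt_nonneg x))
    (by rw [hu2]; exact div_le_div_of_nonneg_left zero_le_one two_pos hx)
  rw [hu2, ← div_eq_mul_inv] at h
  convert h using 3
  ring

lemma exists_abs_sum_primesLE_log_euler_factor_le {lam : ℕ → ℝ}
    (hlam : ∀ p : ℕ, p.Prime → |lam p| ≤ 2) :
    ∃ K, ∀ N : ℕ, |∑ p ∈ primesLE N,
      (log (1 - lam p / √p + 1 / p) + lam p / √p - 1 / p + lam p ^ 2 / p / 2)| ≤ K := by
  refine ⟨2000 * ∑' n : ℕ, (√n)⁻¹ ^ 3, fun N => ?_⟩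
  calc _ ≤ ∑ p ∈ primesLE N, 2000 * (√p)⁻¹ ^ 3 := by
        refine (abs_sum_le_sum_abs _ _).trans (sum_le_sum fun p hp => ?_)
        have hp := prime_of_mem_primesLE hp
        exact abs_log_euler_factor_le (hlam p hp) (by exact_mod_cast hp.two_le)
    _ ≤ 2000 * ∑' n : ℕ, (√n)⁻¹ ^ 3 := by
        rw [← mul_sum]
        gcongr
        exact summable_inv_sqrt_pow_three.sum_le_tsum _ fun _ _ => by positivity

lemma tendsto_div_nhds_one_of_abs_sub_le {α : Type*} {l : Filter α} {f g : α → ℝ}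
    (hg : Tendsto g l atTop) {C : ℝ} (h : ∀ᶠ x in l, |f x - g x| ≤ C) :
    Tendsto (fun x => f x / g x) l (𝓝 1) := by
  have hfg : (f - g) =o[l] g :=
    (Asymptotics.IsBigO.of_bound C (h.mono fun x hx => by simpa using hx)).trans_isLittleO
      ((Asymptotics.isLittleO_one_left_iff ℝ).mpr (tendsto_norm_atTop_atTop.comp hg))
  exact (Asymptotics.isEquivalent_iff_tendsto_one (hg.eventually_ne_atTop 0)).mp hfg

theorem stmt_11 (lam : ℕ → ℝ) (hlam : ∀ p : ℕ, p.Prime → |lam p| ≤ 2)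
    (hST : ∃ C : ℝ, ∀ x : ℝ, 3 ≤ x →
      |(∑ p ∈ (Finset.range (⌊x⌋₊ + 1)).filter Nat.Prime, lam p ^ 2 / p) -
        Real.log (Real.log x)| ≤ C)
    (hDRH : ∃ C : ℝ, ∀ x : ℝ, 2 ≤ x →
      |∑ p ∈ (Finset.range (⌊x⌋₊ + 1)).filter Nat.Prime,
        Real.log (1 - lam p / Real.sqrt p + 1 / p)| ≤ C) :
    Tendsto (fun x : ℝ =>
        (∑ p ∈ (Finset.range (⌊x⌋₊ + 1)).filter Nat.Prime,
          lam p / Real.sqrt p) / ((1 / 2) * Real.log (Real.log x)))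
      atTop (nhds 1) := by
  obtain ⟨C₁, hST⟩ := hST
  obtain ⟨C₂, hDRH⟩ := hDRH
  obtain ⟨C₃, hmertens⟩ := exists_abs_sum_primesLE_inv_sub_log_log_le
  obtain ⟨C₄, htaylor⟩ := exists_abs_sum_primesLE_log_euler_factor_le hlam
  refine tendsto_div_nhds_one_of_abs_sub_le
    ((tendsto_log_atTop.comp tendsto_log_atTop).const_mul_atTop one_half_pos)
    (C := C₁ / 2 + C₂ + C₃ + C₄) ?_
  filter_upwards [eventually_ge_atTop 3] with x hx
  have h₁ := hST x hx
  have h₂ := hDRH x (by linarith)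
  have h₃ := hmertens x (by linarith)
  have h₄ := htaylor ⌊x⌋₊
  rw [← primesLE_eq_filter_range] at h₁ h₂ ⊢
  have hsum : ∑ p ∈ primesLE ⌊x⌋₊, lam p / √p
      = ∑ p ∈ primesLE ⌊x⌋₊,
          (log (1 - lam p / √p + 1 / p) + lam p / √p - 1 / p + lam p ^ 2 / p / 2)
        - ∑ p ∈ primesLE ⌊x⌋₊, log (1 - lam p / √p + 1 / p)
        + ∑ p ∈ primesLE ⌊x⌋₊, (p : ℝ)⁻¹
        - (∑ p ∈ primesLE ⌊x⌋₊, lam p ^ 2 / p) / 2 := by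
    rw [sum_div, ← sum_sub_distrib, ← sum_add_distrib, ← sum_sub_distrib]
    exact sum_congr rfl fun p _ => by ring
  rw [hsum, abs_le]
  rw [abs_le] at h₁ h₂ h₃ h₄
  constructor <;> linarith [h₁.1, h₁.2, h₂.1, h₂.2, h₃.1, h₃.2, h₄.1, h₄.2]
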